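/- arXiv:1507.05936 — 3 statements merged into one kernel-verified Lean document; each statement's English description precedes it below -/
import Mathlib

section
/- Translation property of the CDT: Let I₁ : ℝ → ℝ be a probability density with CDT (with respect to reference density I₀ on X) given by Î₁(x) = (f₁(x) − x)√(I₀(x)), where f₁ satisfies ∫_{inf X}^x I₀ = ∫_{−∞}^{f₁(x)} I₁. If I_μ(x) = I₁(x − μ), then the CDT of I_μ with respect to I₀ satisfies Î_μ(x) = Î₁(x) + μ√(I₀(x)) for all x ∈ X. -/
open MeasureTheory Set

/-!
Since `∫_{-∞}^{y} I₁(τ - μ) dτ = ∫_{-∞}^{y - μ} I₁`, the map `fμ - μ` solves the same equation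
as `f₁`; the CDF of a strictly positive density is strictly increasing, so `fμ = f₁ + μ`.
-/

theorem setIntegral_Iic_comp_sub_right (g : ℝ → ℝ) (μ a : ℝ) :
    ∫ τ in Iic a, g (τ - μ) = ∫ τ in Iic (a - μ), g τ := by
  have hpre : (fun τ => τ - μ) ⁻¹' Iic (a - μ) = Iic a := by
    ext τ; simp
  rw [← hpre, (measurePreserving_sub_right volume μ).setIntegral_preimage_emb
    (measurableEmbedding_subRight μ)]

theorem strictMono_integral_Iic_of_pos {g : ℝ → ℝ} (hg : Integrable g) (hpos : ∀ y, 0 < g y) :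
    StrictMono fun t => ∫ τ in Iic t, g τ := by
  intro a b hab
  have hdiff : (∫ τ in Iic b, g τ) - ∫ τ in Iic a, g τ = ∫ τ in Ioc a b, g τ := by
    rw [intervalIntegral.integral_Iic_sub_Iic hg.integrableOn hg.integrableOn,
      intervalIntegral.integral_of_le hab.le]
  have hsupport : Function.support g = univ :=
    eq_univ_of_forall fun y => (hpos y).ne'
  have hIoc : 0 < ∫ τ in Ioc a b, g τ := by
    rw [setIntegral_pos_iff_support_of_nonneg_ae
      (Filter.Eventually.of_forall fun y => (hpos y).le) hg.integrableOn, hsupport, univ_inter,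
      Real.volume_Ioc]
    simpa using hab
  linarith

theorem cdt_translation_general
    (X : Set ℝ)
    (I₀ I₁ : ℝ → ℝ) (μ : ℝ)
    (hI₁pos : ∀ y : ℝ, 0 < I₁ y)
    (hI₁int : Integrable I₁)
    (f₁ fμ : ℝ → ℝ)
    (hf₁ : ∀ x ∈ X, ∫ τ in Iic (f₁ x), I₁ τ = ∫ τ in sInf X..x, I₀ τ)
    (hfμ : ∀ x ∈ X, ∫ τ in Iic (fμ x), I₁ (τ - μ) = ∫ τ in sInf X..x, I₀ τ) :
    ∀ x ∈ X,
      (fμ x - x) * Real.sqrt (I₀ x)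
        = (f₁ x - x) * Real.sqrt (I₀ x) + μ * Real.sqrt (I₀ x) := by
  intro x hx
  have hshift : fμ x - μ = f₁ x := by
    apply (strictMono_integral_Iic_of_pos hI₁int hI₁pos).injective
    dsimp only
    rw [← setIntegral_Iic_comp_sub_right, hfμ x hx, hf₁ x hx]
  rw [← hshift]
  ring

/-- Translation property of the CDT: if `I_μ(x) = I₁(x - μ)` then
`Î_μ(x) = Î₁(x) + μ √(I₀ x)` on `X`. -/
theorem cdt_translation
    (X : Set ℝ) (hX : X.OrdConnected)
    (I₀ I₁ : ℝ → ℝ) (μ : ℝ)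
    (hI₀pos : ∀ x ∈ X, 0 < I₀ x) (hI₁pos : ∀ y : ℝ, 0 < I₁ y)
    (hI₁int : Integrable I₁) (hI₁tot : ∫ τ : ℝ, I₁ τ = 1)
    (hI₀int : IntegrableOn I₀ X) (hI₀tot : ∫ τ in X, I₀ τ = 1)
    (f₁ fμ : ℝ → ℝ)
    (hf₁ : ∀ x ∈ X, ∫ τ in Iic (f₁ x), I₁ τ = ∫ τ in sInf X..x, I₀ τ)
    (hfμ : ∀ x ∈ X, ∫ τ in Iic (fμ x), I₁ (τ - μ) = ∫ τ in sInf X..x, I₀ τ) :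
    ∀ x ∈ X,
      (fμ x - x) * Real.sqrt (I₀ x)
        = (f₁ x - x) * Real.sqrt (I₀ x) + μ * Real.sqrt (I₀ x) :=
  cdt_translation_general X I₀ I₁ μ hI₁pos hI₁int f₁ fμ hf₁ hfμ
end

section
/- Scaling property of the CDT: Let I₁ be a probability density with CDT Î₁ with respect to reference I₀, realized by the transport map f₁. For a > 0, define I_a(x) = a·I₁(a·x). Then the transport map of I_a is f_a(x) = f₁(x)/a, and consequently the CDT of I_a satisfies Î_a(x) = (Î₁(x) − x(a−1)√(I₀(x)))/a for all x in the domain of I₀. -/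
open MeasureTheory Set

/-! The substitution `τ ↦ a τ` turns the distribution function of `I_a` at `c` into that of
`I₁` at `a c`, so `a f_a(x)` and `f₁(x)` are points of `Y` where the distribution function of
`I₁` takes the same value; it is strictly increasing on `Y`, hence `a f_a = f₁`. -/

theorem strictMonoOn_setIntegral_Iic {g : ℝ → ℝ} {Y : Set ℝ} (hg : Integrable g)
    (hY : Y.OrdConnected) (hpos : ∀ y ∈ Y, 0 < g y) :
    StrictMonoOn (fun c => ∫ τ in Iic c, g τ) Y := by
  intro u hu v hv huv
  have hdiff : (∫ τ in Iic v, g τ) - ∫ τ in Iic u, g τ = ∫ τ in u..v, g τ :=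
    intervalIntegral.integral_Iic_sub_Iic hg.integrableOn hg.integrableOn
  have hgap : 0 < ∫ τ in u..v, g τ :=
    intervalIntegral.intervalIntegral_pos_of_pos_on hg.intervalIntegrable
      (fun t ht => hpos t (hY.out hu hv (Ioo_subset_Icc_self ht))) huv
  linarith

theorem setIntegral_Iic_comp_mul_left (g : ℝ → ℝ) {a : ℝ} (ha : 0 < a) (c : ℝ) :
    ∫ τ in Iic c, a * g (a * τ) = ∫ τ in Iic (a * c), g τ := by
  have hind : ∀ τ, (Iic c).indicator (fun t => a * g (a * t)) τ
      = a * (Iic (a * c)).indicator g (a * τ) := by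
    intro τ
    have hiff : a * τ ≤ a * c ↔ τ ≤ c := mul_le_mul_iff_right₀ ha
    by_cases h : τ ≤ c <;> simp [indicator, h, hiff]
  rw [← integral_indicator measurableSet_Iic, ← integral_indicator measurableSet_Iic]
  simp_rw [hind]
  rw [integral_const_mul, Measure.integral_comp_mul_left, abs_of_pos (inv_pos.mpr ha),
    smul_eq_mul, mul_inv_cancel_left₀ ha.ne']

theorem cdt_scaling_general
    (X Y : Set ℝ) (hY : Y.OrdConnected)
    (I₀ I₁ : ℝ → ℝ) (a : ℝ) (ha : 0 < a)
    (hI₁pos : ∀ y ∈ Y, 0 < I₁ y)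
    (hI₁int : Integrable I₁)
    (f₁ fa : ℝ → ℝ)
    (hf₁maps : MapsTo f₁ X Y) (hfamaps : MapsTo fa X ((fun y => y / a) '' Y))
    (hf₁ : ∀ x ∈ X, ∫ τ in Iic (f₁ x), I₁ τ = ∫ τ in sInf X..x, I₀ τ)
    (hfa : ∀ x ∈ X, ∫ τ in Iic (fa x), a * I₁ (a * τ) = ∫ τ in sInf X..x, I₀ τ) :
    ∀ x ∈ X,
      fa x = f₁ x / a ∧
      (fa x - x) * Real.sqrt (I₀ x)
        = ((f₁ x - x) * Real.sqrt (I₀ x) - x * (a - 1) * Real.sqrt (I₀ x)) / a := by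
  intro x hx
  have hcdf : ∫ τ in Iic (a * fa x), I₁ τ = ∫ τ in Iic (f₁ x), I₁ τ := by
    rw [← setIntegral_Iic_comp_mul_left I₁ ha, hfa x hx, hf₁ x hx]
  have hmem : a * fa x ∈ Y := by
    obtain ⟨y, hy, hfa_eq⟩ := hfamaps hx
    rwa [← hfa_eq, mul_div_cancel₀ y ha.ne']
  have hscaled : a * fa x = f₁ x :=
    (strictMonoOn_setIntegral_Iic hI₁int hY hI₁pos).injOn hmem (hf₁maps hx) hcdf
  have hfa_eq : fa x = f₁ x / a := by rw [← hscaled, mul_div_cancel_left₀ _ ha.ne']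
  refine ⟨hfa_eq, ?_⟩
  rw [hfa_eq]
  field_simp
  ring

/-- Scaling property of the CDT: with `I_a(x) = a · I₁(a x)`, the transport
map of `I_a` is `f_a = f₁ / a` and `Î_a(x) = (Î₁(x) − x(a−1)√(I₀ x))/a`. -/
theorem cdt_scaling
    (X Y : Set ℝ) (hX : X.OrdConnected) (hY : Y.OrdConnected)
    (I₀ I₁ : ℝ → ℝ) (a : ℝ) (ha : 0 < a)
    (hI₀pos : ∀ x ∈ X, 0 < I₀ x)
    (hI₁pos : ∀ y ∈ Y, 0 < I₁ y) (hI₁zero : ∀ y ∉ Y, I₁ y = 0)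
    (hI₀int : IntegrableOn I₀ X) (hI₀tot : ∫ τ in X, I₀ τ = 1)
    (hI₁int : Integrable I₁) (hI₁tot : ∫ τ : ℝ, I₁ τ = 1)
    (f₁ fa : ℝ → ℝ)
    (hf₁maps : MapsTo f₁ X Y) (hfamaps : MapsTo fa X ((fun y => y / a) '' Y))
    (hf₁ : ∀ x ∈ X, ∫ τ in Iic (f₁ x), I₁ τ = ∫ τ in sInf X..x, I₀ τ)
    (hfa : ∀ x ∈ X, ∫ τ in Iic (fa x), a * I₁ (a * τ) = ∫ τ in sInf X..x, I₀ τ) :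
    ∀ x ∈ X,
      fa x = f₁ x / a ∧
      (fa x - x) * Real.sqrt (I₀ x)
        = ((f₁ x - x) * Real.sqrt (I₀ x) - x * (a - 1) * Real.sqrt (I₀ x)) / a :=
  cdt_scaling_general X Y hY I₀ I₁ a ha hI₁pos hI₁int f₁ fa hf₁maps hfamaps hf₁ hfa
end

section
/- Inversion formula for the CDT: Let I₀ be a strictly positive continuous reference density on X with CDF J₀, and let Î₁ be the CDT of a continuous strictly positive density I₁, with transport map f₁(x) = Î₁(x)/√(I₀(x)) + x. Then I₁ is recovered by I₁(y) = (f₁⁻¹)′(y)·I₀(f₁⁻¹(y)) at every point y where f₁⁻¹ is differentiable. -/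
open MeasureTheory Set Filter Topology

/-- FTC: the CDF of a density supported on an ord-connected set `S`, continuous on `S`,
has derivative `f x` within `S` at every `x ∈ S`. -/
lemma cdf_hasDerivWithinAt (S : Set ℝ) (hS : S.OrdConnected)
    (f : ℝ → ℝ) (hcont : ContinuousOn f S) (hzero : ∀ x ∉ S, f x = 0)
    (hint : IntegrableOn f S) {x : ℝ} (hx : x ∈ S) :
    HasDerivWithinAt (fun u => ∫ t in Iic u, f t) (f x) S x := by
  have hmeasS : MeasurableSet S := hS.measurableSet
  have hintR : Integrable f := by
    have h1 : Integrable (S.indicator f) := (integrable_indicator_iff hmeasS).2 hint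
    have h2 : S.indicator f = f := by
      funext u
      by_cases hu : u ∈ S
      · simp [indicator_of_mem hu]
      · simp [indicator_of_notMem hu, hzero u hu]
    rwa [h2] at h1
  have key : ∀ u, ∫ t in Iic u, f t = (∫ t in Iic x, f t) + ∫ t in x..u, f t := by
    intro u
    rw [← intervalIntegral.integral_Iic_sub_Iic hintR.integrableOn hintR.integrableOn]
    ring
  have hmeasF : ∀ l : Filter ℝ, StronglyMeasurableAtFilter f l := by
    intro l
    exact ⟨univ, univ_mem, hintR.aestronglyMeasurable.restrict⟩
  have main : HasDerivWithinAt (fun u => ∫ t in x..u, f t) (f x) S x := by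
    have hsub : S ⊆ (S ∩ Iic x) ∪ (S ∩ Ici x) := by
      intro u hu
      rcases le_total u x with h | h
      · exact Or.inl ⟨hu, h⟩
      · exact Or.inr ⟨hu, h⟩
    have hright : HasDerivWithinAt (fun u => ∫ t in x..u, f t) (f x) (S ∩ Ici x) x := by
      rcases (S ∩ Ioi x).eq_empty_or_nonempty with he | ⟨z, hzS, hzx⟩
      · have hsing : S ∩ Ici x ⊆ {x} := by
          rintro u ⟨huS, hux⟩
          rcases eq_or_lt_of_le (mem_Ici.mp hux) with h | h
          · exact h.symm
          · exact ((eq_empty_iff_forall_notMem.mp he u) ⟨huS, h⟩).elim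
        apply HasDerivWithinAt.mono _ hsing
        exact HasFDerivWithinAt.of_not_accPt <| by
          rw [accPt_iff_clusterPt, inf_principal]; simp [ClusterPt]
      · have hIcc : Icc x z ⊆ S := hS.out hx hzS
        have hcw : ContinuousWithinAt f (Ioi x) x := by
          have h1 : ContinuousWithinAt f (Icc x z) x :=
            (hcont.mono hIcc) x ⟨le_rfl, le_of_lt hzx⟩
          apply h1.mono_of_mem_nhdsWithin
          refine mem_of_superset (inter_mem_nhdsWithin (Ioi x) (Iic_mem_nhds hzx)) ?_
          rintro u ⟨h1u, h2u⟩
          exact ⟨le_of_lt h1u, h2u⟩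
        exact (intervalIntegral.integral_hasDerivWithinAt_right
          hintR.intervalIntegrable (hmeasF _) hcw).mono inter_subset_right
    have hleft : HasDerivWithinAt (fun u => ∫ t in x..u, f t) (f x) (S ∩ Iic x) x := by
      rcases (S ∩ Iio x).eq_empty_or_nonempty with he | ⟨z, hzS, hzx⟩
      · have hsing : S ∩ Iic x ⊆ {x} := by
          rintro u ⟨huS, hux⟩
          rcases eq_or_lt_of_le (mem_Iic.mp hux) with h | h
          · exact h
          · exact ((eq_empty_iff_forall_notMem.mp he u) ⟨huS, h⟩).elim
        apply HasDerivWithinAt.mono _ hsing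
        exact HasFDerivWithinAt.of_not_accPt <| by
          rw [accPt_iff_clusterPt, inf_principal]; simp [ClusterPt]
      · have hIcc : Icc z x ⊆ S := hS.out hzS hx
        have hcw : ContinuousWithinAt f (Iic x) x := by
          have h1 : ContinuousWithinAt f (Icc z x) x :=
            (hcont.mono hIcc) x ⟨le_of_lt hzx, le_rfl⟩
          apply h1.mono_of_mem_nhdsWithin
          refine mem_of_superset (inter_mem_nhdsWithin (Iic x) (Ici_mem_nhds hzx)) ?_
          rintro u ⟨h1u, h2u⟩
          exact ⟨h2u, h1u⟩
        exact (intervalIntegral.integral_hasDerivWithinAt_right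
          hintR.intervalIntegrable (hmeasF _) hcw).mono inter_subset_right
    exact (hleft.union hright).mono hsub
  have : HasDerivWithinAt (fun u => (∫ t in Iic x, f t) + ∫ t in x..u, f t) (f x) S x :=
    main.const_add _
  exact this.congr (fun u _ => (key u)) (key x)

/-- inversion formula for the CDT: `I₁(y) = (f₁⁻¹)′(y) · I₀(f₁⁻¹(y))` at
every point where `f₁⁻¹` is differentiable. -/
theorem cdt_inversion
    (X Y : Set ℝ) (hX : X.OrdConnected) (hY : Y.OrdConnected)
    (I₀ I₁ : ℝ → ℝ)
    (hI₀cont : ContinuousOn I₀ X) (hI₁cont : ContinuousOn I₁ Y)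
    (hI₀pos : ∀ x ∈ X, 0 < I₀ x) (hI₁pos : ∀ y ∈ Y, 0 < I₁ y)
    (hI₀zero : ∀ x ∉ X, I₀ x = 0) (hI₁zero : ∀ y ∉ Y, I₁ y = 0)
    (hI₀int : IntegrableOn I₀ X) (hI₁int : IntegrableOn I₁ Y)
    (hI₀tot : ∫ x in X, I₀ x = 1) (hI₁tot : ∫ y in Y, I₁ y = 1)
    (f₁ f₁inv : ℝ → ℝ)
    (hf₁maps : MapsTo f₁ X Y) (hf₁mono : StrictMonoOn f₁ X)
    (hf₁ : ∀ x ∈ X, ∫ τ in Iic (f₁ x), I₁ τ = ∫ τ in Iic x, I₀ τ)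
    (hf₁inv : ∀ x ∈ X, f₁inv (f₁ x) = x)
    (hf₁inv' : ∀ y ∈ Y, f₁ (f₁inv y) = y)
    (hf₁invmaps : MapsTo f₁inv Y X) :
    ∀ y ∈ Y, ∀ d : ℝ, HasDerivAt f₁inv d y → I₁ y = d * I₀ (f₁inv y) := by
  intro y hy d hd
  set x := f₁inv y with hxdef
  have hxX : x ∈ X := hf₁invmaps hy
  -- the two CDFs
  set F₀ : ℝ → ℝ := fun u => ∫ t in Iic u, I₀ t with hF₀
  set F₁ : ℝ → ℝ := fun u => ∫ t in Iic u, I₁ t with hF₁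
  have h0 : HasDerivWithinAt F₀ (I₀ x) X x :=
    cdf_hasDerivWithinAt X hX I₀ hI₀cont hI₀zero hI₀int hxX
  have h1 : HasDerivWithinAt F₁ (I₁ y) Y y :=
    cdf_hasDerivWithinAt Y hY I₁ hI₁cont hI₁zero hI₁int hy
  -- F₁ = F₀ ∘ f₁inv on Y
  have hFeq : ∀ u ∈ Y, F₀ (f₁inv u) = F₁ u := by
    intro u hu
    have := hf₁ (f₁inv u) (hf₁invmaps hu)
    rw [hf₁inv' u hu] at this
    exact this.symm
  have hcomp : HasDerivWithinAt (F₀ ∘ f₁inv) (I₀ x * d) Y y :=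
    h0.comp y hd.hasDerivWithinAt hf₁invmaps
  have h1' : HasDerivWithinAt (F₀ ∘ f₁inv) (I₁ y) Y y :=
    h1.congr (fun u hu => hFeq u hu) (hFeq y hy)
  -- uniqueness of derivative within Y at y
  have hYnontriv : ∃ a ∈ Y, ∃ b ∈ Y, a < b := by
    by_contra h
    push_neg at h
    have hsub : Y.Subsingleton := by
      intro a ha b hb
      rcases lt_trichotomy a b with hc | hc | hc
      · exact absurd hc (not_lt.2 (h a ha b hb))
      · exact hc
      · exact absurd hc (not_lt.2 (h b hb a ha))
    have hm : (volume : Measure ℝ) Y = 0 := hsub.countable.measure_zero _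
    rw [show (volume.restrict Y) = 0 from Measure.restrict_eq_zero.2 hm,
      integral_zero_measure] at hI₁tot
    norm_num at hI₁tot
  obtain ⟨a, ha, b, hb, hab⟩ := hYnontriv
  have hIcc : Icc a b ⊆ Y := hY.out ha hb
  have hint : (interior Y).Nonempty := by
    refine ⟨(a + b) / 2, interior_mono hIcc ?_⟩
    rw [interior_Icc]
    constructor <;> linarith
  have hu : UniqueDiffWithinAt ℝ Y y :=
    uniqueDiffWithinAt_convex hY.convex hint (subset_closure hy)
  have e1 := h1'.derivWithin hu
  have e2 := hcomp.derivWithin hu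
  rw [e2] at e1
  rw [← e1, mul_comm]
end
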